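/- arXiv:math/0506376 — 3 statements merged into one kernel-verified Lean document; each statement's English description precedes it below -/
import Mathlib

section
/- Let Δ be a complete fan in N ⊗ ℝ with full-dimensional cones σ₁,…,σ_r. A tuple of polynomials (f₁,…,f_r) ∈ (Sym M)^r arises as the tuple of restrictions of a piecewise polynomial function on Δ if and only if for every codimension-one cone τ ∈ Δ that is a common face τ = σ_i ∩ σ_j of two full-dimensional cones, the restrictions satisfy f_i|_τ = f_j|_τ. -/
open MvPolynomial

noncomputable def pev {n : ℕ} (p : MvPolynomial (Fin n) ℤ) (x : Fin n → ℝ) : ℝ :=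
  MvPolynomial.aeval x p

def coneOf {n : ℕ} (G : Finset (Fin n → ℤ)) : Set (Fin n → ℝ) :=
  {x | ∃ c : (Fin n → ℤ) → ℝ, (∀ g, 0 ≤ c g) ∧ x = ∑ g ∈ G, c g • (fun i => (g i : ℝ))}

def IsRatCone {n : ℕ} (σ : Set (Fin n → ℝ)) : Prop := ∃ G, σ = coneOf G

def pairing {n : ℕ} (u : Fin n → ℤ) (x : Fin n → ℝ) : ℝ := ∑ i, (u i : ℝ) * x i

def IsFaceOf {n : ℕ} (τ σ : Set (Fin n → ℝ)) : Prop :=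
  ∃ u : Fin n → ℤ, (∀ x ∈ σ, 0 ≤ pairing u x) ∧ τ = {x ∈ σ | pairing u x = 0}

structure Fan (n : ℕ) where
  cones : Set (Set (Fin n → ℝ))
  finite : cones.Finite
  rat : ∀ σ ∈ cones, IsRatCone σ
  face_mem : ∀ σ ∈ cones, ∀ τ, IsFaceOf τ σ → τ ∈ cones
  inter_face : ∀ σ ∈ cones, ∀ σ' ∈ cones, IsFaceOf (σ ∩ σ') σ

def Fan.support {n : ℕ} (Δ : Fan n) : Set (Fin n → ℝ) := ⋃ σ ∈ Δ.cones, σ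

theorem Fan.subset_support {n : ℕ} (Δ : Fan n) {σ} (hσ : σ ∈ Δ.cones) : σ ⊆ Δ.support :=
  fun _ hx => Set.mem_biUnion hσ hx

def PPset {n : ℕ} (Δ : Fan n) : Set (↥Δ.support → ℝ) :=
  {f | ∀ σ ∈ Δ.cones, ∃ p : MvPolynomial (Fin n) ℤ,
      ∀ x : ↥Δ.support, (x : Fin n → ℝ) ∈ σ → f x = pev p x}

open Topology

/-!
The conditions are necessary because the restrictions of one function agree wherever two cones
meet. For sufficiency, fix `x` in two full-dimensional cones `σ, σ'` and join a generic point of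
`σ` near `x` to a generic point of `σ'` near `x`. Near `x` only cones containing `x` occur, and a
generic segment avoids every intersection of two cones whose span has codimension at least two;
so wherever the segment passes from one full-dimensional cone to another, the two cones meet in a
codimension-one cone containing `x`, and the value at `x` of the attached polynomial does not
change. Since the segment is connected and cones are closed (conic Carathéodory), the polynomials
of `σ` and `σ'` agree at `x`, so they glue. The glued function is polynomial on every cone `τ`,
because the full-dimensional cone containing the sum of the generators of `τ` meets `τ` in a face
of `τ` through that point, which must be `τ` itself.
-/

section NonnegCombinations

variable {ι E : Type*} [AddCommGroup E] [Module ℝ E]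

def nonnegCombinations (v : ι → E) (s : Finset ι) : Set E :=
  {x | ∃ c : ι → ℝ, (∀ i ∈ s, 0 ≤ c i) ∧ ∑ i ∈ s, c i • v i = x}

variable {v : ι → E} {s t : Finset ι} {x : E}

theorem zero_mem_nonnegCombinations : (0 : E) ∈ nonnegCombinations v s :=
  ⟨0, fun _ _ => le_rfl, by simp⟩

theorem mem_nonnegCombinations_of_mem {i : ι} (hi : i ∈ s) : v i ∈ nonnegCombinations v s := by
  classical
  exact ⟨Pi.single i 1, fun j _ => by by_cases hj : j = i <;> simp [hj],
    by simp [Pi.single_apply, hi]⟩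

theorem sum_mem_nonnegCombinations : ∑ i ∈ s, v i ∈ nonnegCombinations v s :=
  ⟨1, fun _ _ => zero_le_one, by simp⟩

theorem convex_nonnegCombinations : Convex ℝ (nonnegCombinations v s) := by
  rintro _ ⟨c, hc, rfl⟩ _ ⟨d, hd, rfl⟩ a b ha hb -
  refine ⟨a • c + b • d, fun i hi =>
    add_nonneg (mul_nonneg ha (hc i hi)) (mul_nonneg hb (hd i hi)), ?_⟩
  simp only [Pi.add_apply, Pi.smul_apply, smul_eq_mul, add_smul, mul_smul, Finset.sum_add_distrib,
    Finset.smul_sum]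

theorem nonnegCombinations_mono (h : t ⊆ s) :
    nonnegCombinations v t ⊆ nonnegCombinations v s := by
  classical
  rintro _ ⟨c, hc, rfl⟩
  refine ⟨fun i => if i ∈ t then c i else 0, fun i _ => ?_, ?_⟩
  · dsimp only
    split_ifs with hi
    exacts [hc i hi, le_rfl]
  · rw [← Finset.sum_subset h fun i _ hi => by simp [hi]]
    exact Finset.sum_congr rfl fun i hi => by simp [hi]

theorem exists_mem_nonnegCombinations_erase [DecidableEq ι] (hs : ¬LinearIndepOn ℝ v s)
    (hx : x ∈ nonnegCombinations v s) : ∃ j ∈ s, x ∈ nonnegCombinations v (s.erase j) := by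
  obtain ⟨c, hc, rfl⟩ := hx
  obtain ⟨f, hf, hfpos⟩ : ∃ f : ι → ℝ, ∑ i ∈ s, f i • v i = 0 ∧ ∃ i ∈ s, 0 < f i := by
    obtain ⟨f, hf, i, hi, hfi⟩ := not_linearIndepOn_finset_iff.1 hs
    rcases hfi.lt_or_gt with hneg | hpos
    · exact ⟨-f, by simp [neg_smul, hf], i, hi, neg_pos.2 hneg⟩
    · exact ⟨f, hf, i, hi, hpos⟩
  obtain ⟨j, hj, hjmin⟩ := (s.filter (0 < f ·)).exists_min_image (fun i => c i / f i)
    (by simpa [Finset.Nonempty] using hfpos)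
  rw [Finset.mem_filter] at hj
  -- Subtracting the largest multiple of the relation keeping all coefficients nonnegative
  -- kills the coefficient of `j`.
  set r := c j / f j
  have hr : 0 ≤ r := div_nonneg (hc j hj.1) hj.2.le
  refine ⟨j, hj.1, c - r • f, fun i hi => ?_, ?_⟩
  · have hi := Finset.mem_of_mem_erase hi
    simp only [Pi.sub_apply, Pi.smul_apply, smul_eq_mul, sub_nonneg]
    rcases le_or_gt (f i) 0 with hfi | hfi
    · exact (mul_nonpos_of_nonneg_of_nonpos hr hfi).trans (hc i hi)
    · exact (le_div_iff₀ hfi).1 (hjmin i (Finset.mem_filter.2 ⟨hi, hfi⟩))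
  · rw [Finset.sum_erase s (by simp [r, hj.2.ne'])]
    simp [sub_smul, mul_smul, Finset.sum_sub_distrib, ← Finset.smul_sum, hf]

theorem exists_linearIndepOn_of_mem_nonnegCombinations (hx : x ∈ nonnegCombinations v s) :
    ∃ t ⊆ s, LinearIndepOn ℝ v t ∧ x ∈ nonnegCombinations v t := by
  classical
  induction s using Finset.strongInduction with
  | H s ih =>
    by_cases hs : LinearIndepOn ℝ v s
    · exact ⟨s, subset_rfl, hs, hx⟩
    · obtain ⟨j, hj, hxj⟩ := exists_mem_nonnegCombinations_erase hs hx
      obtain ⟨t, hts, ht, hxt⟩ := ih _ (Finset.erase_ssubset hj) hxj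
      exact ⟨t, hts.trans (Finset.erase_subset j s), ht, hxt⟩

variable [TopologicalSpace E] [IsTopologicalAddGroup E] [ContinuousSMul ℝ E] [T2Space E]

theorem isClosed_nonnegCombinations_of_linearIndepOn (hs : LinearIndepOn ℝ v s) :
    IsClosed (nonnegCombinations v s) := by
  classical
  have himage : nonnegCombinations v s =
      Fintype.linearCombination ℝ (fun i : s => v i) '' Set.Ici 0 := by
    ext x
    simp only [nonnegCombinations, Set.mem_ofPred_eq, Set.mem_image, Set.mem_Ici,
      Fintype.linearCombination_apply]
    constructor
    · rintro ⟨c, hc, rfl⟩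
      exact ⟨fun i => c i, fun i => hc i i.2, Finset.sum_coe_sort s fun i => c i • v i⟩
    · rintro ⟨c, hc, rfl⟩
      refine ⟨fun i => if hi : i ∈ s then c ⟨i, hi⟩ else 0,
        fun i hi => by simpa [hi] using hc ⟨i, hi⟩, ?_⟩
      rw [← Finset.sum_coe_sort s]
      simp
  rw [himage]
  refine (LinearMap.isClosedEmbedding_of_injective ?_).isClosedMap _ isClosed_Ici
  exact LinearMap.ker_eq_bot.2 (linearIndependent_iff_injective_fintypeLinearCombination.1 hs)

theorem isClosed_nonnegCombinations : IsClosed (nonnegCombinations v s) := by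
  classical
  have hunion : nonnegCombinations v s =
      ⋃ (t : Finset ι) (_ : t ∈ s.powerset.filter fun t : Finset ι => LinearIndepOn ℝ v ↑t),
        nonnegCombinations v t := by
    refine subset_antisymm (fun x hx => ?_) (Set.iUnion₂_subset fun t ht => ?_)
    · obtain ⟨t, hts, ht, hxt⟩ := exists_linearIndepOn_of_mem_nonnegCombinations hx
      exact Set.mem_biUnion (by simpa using ⟨hts, ht⟩) hxt
    · exact nonnegCombinations_mono (Finset.mem_powerset.1 (Finset.mem_filter.1 ht).1)
  rw [hunion]
  exact Set.Finite.isClosed_biUnion (Finset.finite_toSet _) fun t ht =>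
    isClosed_nonnegCombinations_of_linearIndepOn (Finset.mem_filter.1 ht).2

end NonnegCombinations

section FiniteDimensional

variable {E : Type*} [NormedAddCommGroup E] [NormedSpace ℝ E] [FiniteDimensional ℝ E]

theorem interior_nonempty_of_span_eq_top {s : Set E} (hs : Convex ℝ s) (h0 : (0 : E) ∈ s)
    (hspan : Submodule.span ℝ s = ⊤) : (interior s).Nonempty := by
  rw [hs.interior_nonempty_iff_affineSpan_eq_top,
    AffineSubspace.affineSpan_eq_top_iff_vectorSpan_eq_top_of_nonempty ℝ E E ⟨0, h0⟩, eq_top_iff,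
    ← hspan, Submodule.span_le]
  intro x hx
  simpa using vsub_mem_vectorSpan ℝ hx h0

theorem dense_setOf_forall_notMem_of_ne_top {𝒲 : Set (Submodule ℝ E)} (h𝒲 : 𝒲.Finite)
    (hne : ∀ W ∈ 𝒲, W ≠ ⊤) : Dense {x | ∀ W ∈ 𝒲, x ∉ W} := by
  have := FiniteDimensional.complete ℝ E
  have hset : {x | ∀ W ∈ 𝒲, x ∉ W} = ⋂ W ∈ 𝒲, (W : Set E)ᶜ := by ext; simp
  rw [hset]
  refine dense_biInter_of_isOpen (fun W _ => W.closed_of_finiteDimensional.isOpen_compl)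
    h𝒲.countable fun W hW => ?_
  rw [← interior_eq_empty_iff_dense_compl, ← Set.not_nonempty_iff_eq_empty]
  exact fun h => hne W hW (W.eq_top_of_nonempty_interior' h)

end FiniteDimensional

theorem Convex.inter_nhds_inter_dense_nonempty {E : Type*} [AddCommGroup E] [Module ℝ E]
    [TopologicalSpace E] [IsTopologicalAddGroup E] [ContinuousSMul ℝ E] {s U D : Set E}
    (hs : Convex ℝ s) (hint : (interior s).Nonempty) {x : E} (hx : x ∈ s) (hU : U ∈ 𝓝 x)
    (hD : Dense D) : (s ∩ U ∩ D).Nonempty := by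
  have hxcl : x ∈ closure (interior s) := by
    rw [hs.closure_interior_eq_closure_of_nonempty_interior hint]
    exact subset_closure hx
  obtain ⟨y, hyU, hys⟩ := mem_closure_iff.1 hxcl _ isOpen_interior (mem_interior_iff_mem_nhds.2 hU)
  obtain ⟨z, ⟨hzU, hzs⟩, hzD⟩ := hD.inter_open_nonempty _ (isOpen_interior.inter isOpen_interior)
    ⟨y, hyU, hys⟩
  exact ⟨z, ⟨interior_subset hzs, interior_subset hzU⟩, hzD⟩

theorem Submodule.sup_span_singleton_ne_top {K V : Type*} [Field K] [AddCommGroup V] [Module K V]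
    [FiniteDimensional K V] {W : Submodule K V} (hW : Module.finrank K W + 2 ≤ Module.finrank K V)
    (u : V) : W ⊔ span K {u} ≠ ⊤ := by
  intro htop
  have hle := Submodule.finrank_add_le_finrank_add_finrank W (span K {u})
  have hu : Module.finrank K (span K {u}) ≤ 1 := by
    simpa using finrank_span_le_card (R := K) ({u} : Set V)
  rw [htop, finrank_top] at hle
  omega

theorem Submodule.notMem_of_mem_segment {V : Type*} [AddCommGroup V] [Module ℝ V]
    {W : Submodule ℝ V} {u v y : V} (hu : u ∉ W) (hv : v ∉ W ⊔ Submodule.span ℝ {u}) (hy : y ∈ segment ℝ u v) :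
    y ∉ W := by
  obtain ⟨a, b, ha, hb, hab, rfl⟩ := hy
  intro hyW
  rcases hb.eq_or_lt with rfl | hb
  · rw [add_zero] at hab
    simp_all
  · apply hv
    have : v = b⁻¹ • (a • u + b • v) + (-(b⁻¹ * a)) • u := by
      rw [smul_add, smul_smul, smul_smul, inv_mul_cancel₀ hb.ne', one_smul, neg_smul]
      abel
    rw [this]
    exact add_mem (Submodule.mem_sup_left (W.smul_mem _ hyW))
      (Submodule.mem_sup_right (Submodule.smul_mem _ _ (Submodule.mem_span_singleton_self u)))

theorem IsPreconnected.eq_of_closed_cover {X ι β : Type*} [TopologicalSpace X] {S : Set X}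
    (hS : IsPreconnected S) {I : Set ι} (hI : I.Finite) {F : ι → Set X}
    (hF : ∀ i ∈ I, IsClosed (F i)) (hcover : S ⊆ ⋃ i ∈ I, F i) (c : ι → β)
    (hc : ∀ i ∈ I, ∀ j ∈ I, ∀ y ∈ S, y ∈ F i → y ∈ F j → c i = c j)
    {i j : ι} (hi : i ∈ I) (hj : j ∈ I) (hiS : (S ∩ F i).Nonempty) (hjS : (S ∩ F j).Nonempty) :
    c i = c j := by
  by_contra hne
  set good := ⋃ k ∈ {k ∈ I | c k = c i}, F k
  set bad := ⋃ k ∈ {k ∈ I | c k ≠ c i}, F k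
  have hclosed : ∀ P : ι → Prop, IsClosed (⋃ k ∈ {k ∈ I | P k}, F k) := fun P =>
    (hI.subset (Set.sep_subset _ _)).isClosed_biUnion fun k hk => hF k hk.1
  have hS_sub : S ⊆ good ∪ bad := fun y hy => by
    obtain ⟨k, hk, hyk⟩ := Set.mem_iUnion₂.1 (hcover hy)
    by_cases hki : c k = c i
    exacts [Or.inl (Set.mem_biUnion ⟨hk, hki⟩ hyk), Or.inr (Set.mem_biUnion ⟨hk, hki⟩ hyk)]
  have hgood : (S ∩ good).Nonempty :=
    hiS.mono (Set.inter_subset_inter_right _ (Set.subset_biUnion_of_mem (u := F) ⟨hi, rfl⟩))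
  have hbad : (S ∩ bad).Nonempty :=
    hjS.mono (Set.inter_subset_inter_right _ (Set.subset_biUnion_of_mem (u := F) ⟨hj, Ne.symm hne⟩))
  obtain ⟨y, hyS, hyi, hyj⟩ := isPreconnected_closed_iff.1 hS _ _ (hclosed _) (hclosed _)
    hS_sub hgood hbad
  obtain ⟨k, ⟨hk, hki⟩, hyk⟩ := Set.mem_iUnion₂.1 hyi
  obtain ⟨l, ⟨hl, hli⟩, hyl⟩ := Set.mem_iUnion₂.1 hyj
  exact hli (hki ▸ (hc k hk l hl y hyS hyk hyl).symm)

section Faces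

variable {n : ℕ}

theorem coneOf_eq_nonnegCombinations (G : Finset (Fin n → ℤ)) :
    coneOf G = nonnegCombinations (fun g i => (g i : ℝ)) G := by
  ext x
  constructor
  · rintro ⟨c, hc, rfl⟩
    exact ⟨c, fun g _ => hc g, rfl⟩
  · rintro ⟨c, hc, rfl⟩
    refine ⟨fun g => max (c g) 0, fun g => le_max_right _ _, Finset.sum_congr rfl fun g hg => ?_⟩
    dsimp only
    rw [max_eq_left (hc g hg)]

theorem pairing_eq_dotProductBilin (u : Fin n → ℤ) :
    pairing u = dotProductBilin ℝ ℝ (fun i => (u i : ℝ)) :=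
  rfl

theorem IsFaceOf.eq_of_span_eq_top {τ σ : Set (Fin n → ℝ)} (h : IsFaceOf τ σ)
    (hspan : Submodule.span ℝ τ = ⊤) : τ = σ := by
  obtain ⟨u, -, rfl⟩ := h
  have hker : Submodule.span ℝ {x ∈ σ | pairing u x = 0} ≤
      LinearMap.ker (dotProductBilin ℝ ℝ (fun i => (u i : ℝ))) :=
    Submodule.span_le.2 fun x hx => hx.2
  rw [hspan, top_le_iff, LinearMap.ker_eq_top] at hker
  ext x
  simp [pairing_eq_dotProductBilin, hker]

theorem IsFaceOf.eq_coneOf_of_sum_mem {τ : Set (Fin n → ℝ)} {G : Finset (Fin n → ℤ)}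
    (h : IsFaceOf τ (coneOf G)) (hz : ∑ g ∈ G, (fun i => (g i : ℝ)) ∈ τ) : τ = coneOf G := by
  obtain ⟨u, hu, rfl⟩ := h
  rw [coneOf_eq_nonnegCombinations] at hu ⊢
  have hgen : ∀ g ∈ G, pairing u (fun i => (g i : ℝ)) = 0 := by
    refine (Finset.sum_eq_zero_iff_of_nonneg fun g hg =>
      hu _ (mem_nonnegCombinations_of_mem hg)).1 ?_
    simpa [pairing_eq_dotProductBilin, map_sum] using hz.2
  ext x
  refine ⟨fun hx => hx.1, fun hx => ⟨hx, ?_⟩⟩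
  obtain ⟨c, -, rfl⟩ := hx
  rw [pairing_eq_dotProductBilin, map_sum]
  exact Finset.sum_eq_zero fun g hg => by
    rw [map_smul, ← pairing_eq_dotProductBilin, hgen g hg, smul_zero]

end Faces

namespace Fan

variable {n : ℕ} (Δ : Fan n)

def fullDimCones : Set (Set (Fin n → ℝ)) := {σ ∈ Δ.cones | Submodule.span ℝ σ = ⊤}

theorem finite_fullDimCones : Δ.fullDimCones.Finite :=
  Δ.finite.subset (Set.sep_subset _ _)

variable {Δ}

theorem isClosed_of_mem {σ : Set (Fin n → ℝ)} (hσ : σ ∈ Δ.cones) : IsClosed σ := by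
  obtain ⟨G, rfl⟩ := Δ.rat σ hσ
  rw [coneOf_eq_nonnegCombinations]
  exact isClosed_nonnegCombinations

theorem convex_of_mem {σ : Set (Fin n → ℝ)} (hσ : σ ∈ Δ.cones) : Convex ℝ σ := by
  obtain ⟨G, rfl⟩ := Δ.rat σ hσ
  rw [coneOf_eq_nonnegCombinations]
  exact convex_nonnegCombinations

theorem interior_nonempty_of_mem_fullDimCones {σ : Set (Fin n → ℝ)}
    (hσ : σ ∈ Δ.fullDimCones) : (interior σ).Nonempty := by
  obtain ⟨G, rfl⟩ := Δ.rat σ hσ.1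
  have hspan := hσ.2
  rw [coneOf_eq_nonnegCombinations] at hspan ⊢
  exact interior_nonempty_of_span_eq_top convex_nonnegCombinations zero_mem_nonnegCombinations
    hspan

theorem eq_of_span_inter_eq_top {σ σ' : Set (Fin n → ℝ)} (hσ : σ ∈ Δ.cones)
    (hσ' : σ' ∈ Δ.cones) (hspan : Submodule.span ℝ (σ ∩ σ') = ⊤) : σ = σ' := by
  have h₁ : σ ∩ σ' = σ := (Δ.inter_face σ hσ σ' hσ').eq_of_span_eq_top hspan
  have h₂ : σ' ∩ σ = σ' :=
    (Δ.inter_face σ' hσ' σ hσ).eq_of_span_eq_top (by rwa [Set.inter_comm])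
  exact h₁.symm.trans ((Set.inter_comm σ σ').trans h₂)

variable (Δ)

theorem eventually_mem_imp_mem (x : Fin n → ℝ) :
    ∀ᶠ y in 𝓝 x, ∀ σ ∈ Δ.cones, y ∈ σ → x ∈ σ := by
  refine (Δ.finite.eventually_all).2 fun σ hσ => ?_
  by_cases hx : x ∈ σ
  · exact Filter.Eventually.of_forall fun _ _ => hx
  · filter_upwards [(isClosed_of_mem hσ).isOpen_compl.mem_nhds hx] with y hy hyσ
    exact absurd hyσ hy

theorem exists_mem_fullDimCones (hcomplete : Δ.support = Set.univ) (x : Fin n → ℝ) :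
    ∃ σ ∈ Δ.fullDimCones, x ∈ σ := by
  -- Points outside the spans of the lower-dimensional cones are dense, and each of them lies in
  -- a full-dimensional cone; the union of these cones is closed.
  set 𝒲 := (Submodule.span ℝ ·) '' {σ ∈ Δ.cones | Submodule.span ℝ σ ≠ ⊤}
  have hdense : Dense {y | ∀ W ∈ 𝒲, y ∉ W} :=
    dense_setOf_forall_notMem_of_ne_top ((Δ.finite.subset (Set.sep_subset _ _)).image _)
      (by rintro _ ⟨σ, hσ, rfl⟩; exact hσ.2)
  have hsub : {y | ∀ W ∈ 𝒲, y ∉ W} ⊆ ⋃ σ ∈ Δ.fullDimCones, σ := by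
    intro y hy
    obtain ⟨σ, hσ, hyσ⟩ := Set.mem_iUnion₂.1 (hcomplete ▸ Set.mem_univ y : y ∈ Δ.support)
    by_cases hspan : Submodule.span ℝ σ = ⊤
    · exact Set.mem_biUnion ⟨hσ, hspan⟩ hyσ
    · exact absurd (Submodule.subset_span hyσ) (hy _ ⟨σ, ⟨hσ, hspan⟩, rfl⟩)
  have hclosed : IsClosed (⋃ σ ∈ Δ.fullDimCones, σ) :=
    Δ.finite_fullDimCones.isClosed_biUnion fun σ hσ => isClosed_of_mem hσ.1
  have hx : x ∈ ⋃ σ ∈ Δ.fullDimCones, σ := hclosed.closure_subset_iff.2 hsub (hdense x)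
  simpa using hx

theorem exists_superset_mem_fullDimCones (hcomplete : Δ.support = Set.univ)
    {τ : Set (Fin n → ℝ)} (hτ : τ ∈ Δ.cones) : ∃ σ ∈ Δ.fullDimCones, τ ⊆ σ := by
  obtain ⟨G, rfl⟩ := Δ.rat τ hτ
  have hz : ∑ g ∈ G, (fun i => (g i : ℝ)) ∈ coneOf G := by
    rw [coneOf_eq_nonnegCombinations]
    exact sum_mem_nonnegCombinations
  obtain ⟨σ, hσ, hzσ⟩ := Δ.exists_mem_fullDimCones hcomplete (∑ g ∈ G, fun i => (g i : ℝ))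
  have hface := (Δ.inter_face _ hτ σ hσ.1).eq_coneOf_of_sum_mem ⟨hz, hzσ⟩
  exact ⟨σ, hσ, Set.inter_eq_left.1 hface⟩

def CodimOneCompatible {β : Type*} (φ : Set (Fin n → ℝ) → (Fin n → ℝ) → β) : Prop :=
  ∀ σ ∈ Δ.cones, ∀ σ' ∈ Δ.cones, Submodule.span ℝ σ = ⊤ → Submodule.span ℝ σ' = ⊤ →
    Module.finrank ℝ ↥(Submodule.span ℝ (σ ∩ σ')) + 1 = n → ∀ x ∈ σ ∩ σ', φ σ x = φ σ' x

def codimTwoSpans : Set (Submodule ℝ (Fin n → ℝ)) :=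
  {W | ∃ σ ∈ Δ.cones, ∃ σ' ∈ Δ.cones, Submodule.span ℝ (σ ∩ σ') = W ∧
    Module.finrank ℝ W + 2 ≤ n}

theorem finite_codimTwoSpans : Δ.codimTwoSpans.Finite := by
  refine ((Δ.finite.prod Δ.finite).image fun q => Submodule.span ℝ (q.1 ∩ q.2)).subset ?_
  rintro _ ⟨σ, hσ, σ', hσ', rfl, -⟩
  exact ⟨(σ, σ'), ⟨hσ, hσ'⟩, rfl⟩

theorem sup_span_singleton_ne_top_of_mem_codimTwoSpans {W : Submodule ℝ (Fin n → ℝ)}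
    (hW : W ∈ Δ.codimTwoSpans) (u : Fin n → ℝ) : W ⊔ Submodule.span ℝ {u} ≠ ⊤ := by
  obtain ⟨-, -, -, -, -, hcodim⟩ := hW
  exact W.sup_span_singleton_ne_top (by simpa using hcodim) u

variable {Δ} {β : Type*} {φ : Set (Fin n → ℝ) → (Fin n → ℝ) → β}

theorem CodimOneCompatible.apply_eq_of_le_finrank_add_one (H : Δ.CodimOneCompatible φ)
    {σ σ' : Set (Fin n → ℝ)} (hσ : σ ∈ Δ.fullDimCones) (hσ' : σ' ∈ Δ.fullDimCones)
    (hcodim : n ≤ Module.finrank ℝ ↥(Submodule.span ℝ (σ ∩ σ')) + 1) {x : Fin n → ℝ}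
    (hx : x ∈ σ ∩ σ') : φ σ x = φ σ' x := by
  rcases hcodim.lt_or_eq with hlt | heq
  · have hle := Submodule.finrank_le (Submodule.span ℝ (σ ∩ σ'))
    rw [Module.finrank_fin_fun] at hle
    have htop : Submodule.span ℝ (σ ∩ σ') = ⊤ :=
      Submodule.eq_top_of_finrank_eq (by rw [Module.finrank_fin_fun]; omega)
    rw [eq_of_span_inter_eq_top hσ.1 hσ'.1 htop]
  · exact H σ hσ.1 σ' hσ'.1 hσ.2 hσ'.2 heq.symm x hx

theorem CodimOneCompatible.apply_eq_of_mem (hcomplete : Δ.support = Set.univ)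
    (H : Δ.CodimOneCompatible φ) {σ σ' : Set (Fin n → ℝ)} (hσ : σ ∈ Δ.fullDimCones)
    (hσ' : σ' ∈ Δ.fullDimCones) {x : Fin n → ℝ} (hx : x ∈ σ) (hx' : x ∈ σ') :
    φ σ x = φ σ' x := by
  obtain ⟨δ, hδ, hnear⟩ := Metric.eventually_nhds_iff_ball.1 (Δ.eventually_mem_imp_mem x)
  have hball : Metric.ball x δ ∈ 𝓝 x := Metric.ball_mem_nhds x hδ
  obtain ⟨u, ⟨huσ, hux⟩, hu⟩ := (convex_of_mem hσ.1).inter_nhds_inter_dense_nonempty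
    (interior_nonempty_of_mem_fullDimCones hσ) hx hball
    (dense_setOf_forall_notMem_of_ne_top Δ.finite_codimTwoSpans fun W hW =>
      ne_top_of_le_ne_top (Δ.sup_span_singleton_ne_top_of_mem_codimTwoSpans hW 0) le_sup_left)
  obtain ⟨v, ⟨hvσ', hvx⟩, hv⟩ := (convex_of_mem hσ'.1).inter_nhds_inter_dense_nonempty
    (interior_nonempty_of_mem_fullDimCones hσ') hx' hball
    (dense_setOf_forall_notMem_of_ne_top
      (Δ.finite_codimTwoSpans.image (· ⊔ Submodule.span ℝ {u}))
      (by rintro _ ⟨W, hW, rfl⟩; exact Δ.sup_span_singleton_ne_top_of_mem_codimTwoSpans hW u))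
  have hseg : segment ℝ u v ⊆ Metric.ball x δ := (convex_ball x δ).segment_subset hux hvx
  refine (convex_segment u v).isPreconnected.eq_of_closed_cover Δ.finite_fullDimCones
    (fun τ hτ => isClosed_of_mem hτ.1) (fun y _ => ?_) (fun τ => φ τ x) ?_ hσ hσ'
    ⟨u, left_mem_segment ℝ u v, huσ⟩ ⟨v, right_mem_segment ℝ u v, hvσ'⟩
  · obtain ⟨τ, hτ, hyτ⟩ := Δ.exists_mem_fullDimCones hcomplete y
    exact Set.mem_biUnion hτ hyτ
  · intro τ hτ τ' hτ' y hy hyτ hyτ'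
    refine H.apply_eq_of_le_finrank_add_one hτ hτ' ?_
      ⟨hnear y (hseg hy) τ hτ.1 hyτ, hnear y (hseg hy) τ' hτ'.1 hyτ'⟩
    by_contra! hlt
    have hW : Submodule.span ℝ (τ ∩ τ') ∈ Δ.codimTwoSpans := ⟨τ, hτ.1, τ', hτ'.1, rfl, by omega⟩
    exact Submodule.notMem_of_mem_segment (hu _ hW) (hv _ ⟨_, hW, rfl⟩) hy
      (Submodule.subset_span ⟨hyτ, hyτ'⟩)

end Fan

/-- Let `Δ` be a complete fan.  A tuple of integral polynomials
`(p σ)`, one for each full-dimensional cone `σ`, arises as the tuple of restrictions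
of a piecewise polynomial function on `Δ` if and only if, for every codimension-one
cone `τ = σ ∩ σ'` that is the common face of two full-dimensional cones `σ, σ'`,
the restrictions of `p σ` and `p σ'` to `τ` agree. -/
theorem tuple_glues_iff_codim_one_compatible {n : ℕ} (Δ : Fan n)
    (hcomplete : Δ.support = Set.univ)
    (p : Set (Fin n → ℝ) → MvPolynomial (Fin n) ℤ) :
    (∃ f ∈ PPset Δ, ∀ σ ∈ Δ.cones, Submodule.span ℝ σ = ⊤ →
        ∀ x : ↥Δ.support, (x : Fin n → ℝ) ∈ σ → f x = pev (p σ) x) ↔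
    (∀ σ ∈ Δ.cones, ∀ σ' ∈ Δ.cones, Submodule.span ℝ σ = ⊤ → Submodule.span ℝ σ' = ⊤ →
        Module.finrank ℝ ↥(Submodule.span ℝ (σ ∩ σ')) + 1 = n →
        ∀ x ∈ σ ∩ σ', pev (p σ) x = pev (p σ') x) := by
  constructor
  · rintro ⟨f, -, hf⟩ σ hσ σ' hσ' hspan hspan' - x hx
    have hxs : x ∈ Δ.support := hcomplete ▸ Set.mem_univ x
    rw [← hf σ hσ hspan ⟨x, hxs⟩ hx.1, ← hf σ' hσ' hspan' ⟨x, hxs⟩ hx.2]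
  · intro H
    replace H : Δ.CodimOneCompatible fun σ => pev (p σ) := H
    choose C hC hxC using Δ.exists_mem_fullDimCones hcomplete
    refine ⟨fun x => pev (p (C x)) x, fun τ hτ => ?_,
      fun σ hσ hspan x hx => H.apply_eq_of_mem hcomplete (hC x) ⟨hσ, hspan⟩ (hxC x) hx⟩
    obtain ⟨σ, hσ, hτσ⟩ := Δ.exists_superset_mem_fullDimCones hcomplete hτ
    exact ⟨p σ, fun x hx => H.apply_eq_of_mem hcomplete (hC x) hσ (hxC x) (hτσ hx)⟩
end

section
/- Let Δ be the complete fan in ℝ² whose rays are generated by (1,1), (1,−1), (−1,1), (−1,−1). In the Mayer–Vietoris complex computing H³_T of the associated toric surface, the differential d : ℤ² ⊕ ℤ² ⊕ ℤ² ⊕ ℤ² → ℤ ⊕ ℤ ⊕ ℤ ⊕ ℤ (indexed by the four maximal cones and four rays as in the Brylinski–Zhang spectral sequence) has the property that every element (n₁,n₂,n₃,n₄) of its image satisfies n₁+n₂+n₃+n₄ ≡ 0 (mod 2); consequently the cokernel of d has nonzero 2-torsion. -/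
/-- The primitive generators of the four rays of the complete fan in `ℝ²` with rays through
`(1,1)`, `(1,-1)`, `(-1,-1)`, `(-1,1)`. -/
def rayGen : Fin 4 → Fin 2 → ℤ := ![![1, 1], ![1, -1], ![-1, -1], ![-1, 1]]

/-- The restriction map `M = ℤ² ≅ H²_T(U_σ) → H²_T(U_ρ) ≅ M_ρ = M/(ρ^⊥ ∩ M) ≅ ℤ` for the ray
`ρ`, realized via the identification of `M_ρ` with `ℤ` by evaluation against the primitive
generator of `ρ`. -/
def resRay (ρ : Fin 4) (m : Fin 2 → ℤ) : ℤ := m 0 * rayGen ρ 0 + m 1 * rayGen ρ 1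

/-- The Mayer–Vietoris (Čech) differential `d : ℤ² ⊕ ℤ² ⊕ ℤ² ⊕ ℤ² → ℤ ⊕ ℤ ⊕ ℤ ⊕ ℤ` of the
Brylinski–Zhang spectral sequence computing `H³_T` of the toric surface of the fan with rays
through `(±1, ±1)`: the maximal cones are indexed so that cone `i` is spanned by rays `i` and
`i+1 (mod 4)`, and the component of `d` at the ray `ρ` is the difference of the restrictions
from the two adjacent maximal cones. -/
def dBZ (f : Fin 4 → Fin 2 → ℤ) : Fin 4 → ℤ :=
  ![resRay 0 (f 3) - resRay 0 (f 0),
    resRay 1 (f 0) - resRay 1 (f 1),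
    resRay 2 (f 1) - resRay 2 (f 2),
    resRay 3 (f 2) - resRay 3 (f 3)]

lemma even_sum_dBZ (f : Fin 4 → Fin 2 → ℤ) : 2 ∣ ∑ j, dBZ f j := by
  simp only [dBZ, resRay, rayGen, Fin.sum_univ_four, Matrix.cons_val_zero,
    Matrix.cons_val_one, Matrix.head_cons, Matrix.cons_val_two, Matrix.tail_cons,
    Matrix.cons_val_three, mul_one, mul_neg, mul_neg_one]
  omega

lemma even_sum_span {x : Fin 4 → ℤ} (hx : x ∈ Submodule.span ℤ (Set.range dBZ)) :
    2 ∣ ∑ j, x j := by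
  induction hx using Submodule.span_induction with
  | mem x hx =>
    obtain ⟨f, rfl⟩ := hx
    exact even_sum_dBZ f
  | zero => simp
  | add x y _ _ hx hy =>
    simpa [Finset.sum_add_distrib] using dvd_add hx hy
  | smul a x _ hx =>
    rw [show ∑ j, (a • x) j = a * ∑ j, x j by simp [Finset.mul_sum]]
    exact Dvd.dvd.mul_left hx a

/-- Every element `(n₁, n₂, n₃, n₄)` of the image of the differential `d`
satisfies `n₁ + n₂ + n₃ + n₄ ≡ 0 (mod 2)`; consequently the cokernel of `d` (which is
`H³_T` of the toric surface) has nonzero 2-torsion. -/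
theorem image_of_differential_has_even_sum_and_cokernel_has_two_torsion :
    (∀ f : Fin 4 → Fin 2 → ℤ, 2 ∣ ∑ j, dBZ f j) ∧
    ∃ y : (Fin 4 → ℤ) ⧸ Submodule.span ℤ (Set.range dBZ), y ≠ 0 ∧ 2 • y = 0 := by
  refine ⟨even_sum_dBZ, Submodule.Quotient.mk ![1, 0, 0, 0], ?_, ?_⟩
  · intro h
    rw [Submodule.Quotient.mk_eq_zero] at h
    have := even_sum_span h
    simp [Fin.sum_univ_four] at this
  · rw [two_smul, ← Submodule.Quotient.mk_add, Submodule.Quotient.mk_eq_zero]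
    have hmem : dBZ ![![1, 1], 0, 0, 0] ∈ Submodule.span ℤ (Set.range dBZ) :=
      Submodule.subset_span ⟨_, rfl⟩
    have heq : (![1, 0, 0, 0] : Fin 4 → ℤ) + ![1, 0, 0, 0] = -dBZ ![![1, 1], 0, 0, 0] := by
      funext j
      fin_cases j <;> simp [dBZ, resRay, rayGen, Matrix.vecHead, Matrix.vecTail]
    rw [heq]
    exact neg_mem hmem
end

section
/- For a smooth full-dimensional cone, integral polynomial functions restrict surjectively onto the boundary data: let σ ⊂ N ⊗ ℝ be a cone spanned by part of a basis of N, with faces τ₁, …, τ_k. Then every compatible tuple (f_τ)_{τ ≺ σ, τ ≠ σ} of integral polynomials on the proper faces of σ (f_τ ∈ Sym M_τ with f_τ|_{τ'} = f_{τ'} for τ' ≺ τ) extends to an element f ∈ Sym M_σ with f|_τ = f_τ for all proper faces τ; in particular PP*(∂σ) is a quotient of Sym M_σ. -/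
/-- The restriction map `Sym M_σ = ℤ[x_1, …, x_d] → Sym M_τ` to the face
`τ = cone(e_i : i ∈ S)` of the smooth cone `σ = cone(e_1, …, e_d)`: it sets `x_i = 0` for
`i ∉ S`. -/
noncomputable def faceRes {d : ℕ} (S : Finset (Fin d)) :
    MvPolynomial (Fin d) ℤ →ₐ[ℤ] MvPolynomial (Fin d) ℤ :=
  MvPolynomial.aeval (fun i => if i ∈ S then MvPolynomial.X i else 0)

lemma faceRes_faceRes {d : ℕ} (S T : Finset (Fin d)) (p : MvPolynomial (Fin d) ℤ) :
    faceRes T (faceRes S p) = faceRes (S ∩ T) p := by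
  have h : (faceRes T).comp (faceRes S) = faceRes (S ∩ T) := by
    apply MvPolynomial.algHom_ext
    intro i
    by_cases h1 : i ∈ S <;> by_cases h2 : i ∈ T <;>
      simp [faceRes, h1, h2]
  calc faceRes T (faceRes S p) = ((faceRes T).comp (faceRes S)) p := rfl
    _ = faceRes (S ∩ T) p := by rw [h]

/-- For a smooth cone `σ = cone(e_1, …, e_d)` spanned by part of a basis
of `N`, integral polynomial functions restrict surjectively onto the boundary data: every
compatible tuple `(f_S)` of integral polynomials indexed by the proper faces
`S ⊊ {1, …, d}` of `σ` (with `f_S` a polynomial in the variables `x_i, i ∈ S`, and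
`f_T|_S = f_S` for `S ⊆ T`) extends to a polynomial `g ∈ Sym M_σ = ℤ[x_1, …, x_d]` with
`g|_S = f_S` for every proper face; in particular `PP*(∂σ)` is a quotient of `Sym M_σ`. -/
theorem polynomials_surject_onto_boundary_data {d : ℕ}
    (f : Finset (Fin d) → MvPolynomial (Fin d) ℤ)
    (hvars : ∀ S, S ≠ Finset.univ → faceRes S (f S) = f S)
    (hcompat : ∀ S T : Finset (Fin d), S ⊆ T → T ≠ Finset.univ → faceRes S (f T) = f S) :
    ∃ g : MvPolynomial (Fin d) ℤ, ∀ S, S ≠ Finset.univ → faceRes S g = f S := by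
  classical
  set P : Finset (Finset (Fin d)) :=
    (Finset.univ : Finset (Fin d)).powerset.filter (· ≠ Finset.univ) with hP
  refine ⟨∑ S ∈ P, ((-1 : ℤ) ^ (d - 1 + S.card)) • f S, ?_⟩
  intro T hT
  rw [map_sum]
  have key : ∀ S ∈ P, faceRes T (((-1 : ℤ) ^ (d - 1 + S.card)) • f S)
      = ((-1 : ℤ) ^ (d - 1 + S.card)) • f (S ∩ T) := by
    intro S hS
    rw [Finset.mem_filter] at hS
    rw [map_zsmul]
    congr 1
    rw [← hvars S hS.2, faceRes_faceRes]
    exact hcompat _ _ Finset.inter_subset_left hS.2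
  rw [Finset.sum_congr rfl key]
  -- group by the fiber R = S ∩ T
  have hmaps : ∀ S ∈ P, S ∩ T ∈ T.powerset := fun S _ =>
    Finset.mem_powerset.2 Finset.inter_subset_right
  rw [← Finset.sum_fiberwise_of_maps_to hmaps
    (fun S => ((-1 : ℤ) ^ (d - 1 + S.card)) • f (S ∩ T))]
  -- compute the coefficient of each f R
  have coeff : ∀ R ∈ T.powerset,
      (∑ S ∈ P.filter (fun S => S ∩ T = R),
        ((-1 : ℤ) ^ (d - 1 + S.card)) • f (S ∩ T))
      = (if R = T then (1 : ℤ) else 0) • f R := by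
    intro R hR
    rw [Finset.mem_powerset] at hR
    have hconst : ∀ S ∈ P.filter (fun S => S ∩ T = R),
        ((-1 : ℤ) ^ (d - 1 + S.card)) • f (S ∩ T)
        = ((-1 : ℤ) ^ (d - 1 + S.card)) • f R := by
      intro S hS
      rw [Finset.mem_filter] at hS
      rw [hS.2]
    rw [Finset.sum_congr rfl hconst, ← Finset.sum_smul]
    congr 1
    -- the coefficient sum
    have hfull : (∑ S ∈ Finset.univ.powerset.filter (fun S => S ∩ T = R),
        ((-1 : ℤ) ^ (d - 1 + S.card))) = 0 := by
      have hbij : (∑ S ∈ Finset.univ.powerset.filter (fun S => S ∩ T = R),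
          ((-1 : ℤ) ^ (d - 1 + S.card)))
          = ∑ U ∈ Tᶜ.powerset, ((-1 : ℤ) ^ (d - 1 + (R.card + U.card))) := by
        refine Finset.sum_nbij' (fun S => S \ T) (fun U => R ∪ U) ?_ ?_ ?_ ?_ ?_
        · intro S hS
          rw [Finset.mem_filter] at hS
          exact Finset.mem_powerset.2 (by
            intro x hx
            rw [Finset.mem_sdiff] at hx
            simpa using hx.2)
        · intro U hU
          rw [Finset.mem_powerset] at hU
          refine Finset.mem_filter.2 ⟨Finset.mem_powerset.2 (Finset.subset_univ _), ?_⟩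
          have hRT : R ∩ T = R := Finset.inter_eq_left.2 hR
          have hUT : U ∩ T = ∅ := by
            ext x
            simp only [Finset.mem_inter, Finset.notMem_empty, iff_false, not_and]
            intro hxU hxT
            exact (Finset.mem_compl.1 (hU hxU)) hxT
          rw [Finset.union_inter_distrib_right, hRT, hUT, Finset.union_empty]
        · intro S hS
          rw [Finset.mem_filter] at hS
          rw [← hS.2]
          ext x
          simp only [Finset.mem_union, Finset.mem_inter, Finset.mem_sdiff]
          tauto
        · intro U hU
          rw [Finset.mem_powerset] at hU
          ext x
          simp only [Finset.mem_sdiff, Finset.mem_union]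
          constructor
          · rintro ⟨hx | hx, hxT⟩
            · exact absurd (hR hx) hxT
            · exact hx
          · intro hx
            exact ⟨Or.inr hx, by simpa using hU hx⟩
        · intro S hS
          rw [Finset.mem_filter] at hS
          have hdisj : Disjoint R (S \ T) := by
            refine Finset.disjoint_left.2 fun x hx hx' => ?_
            exact (Finset.mem_sdiff.1 hx').2 (hR hx)
          have hun : S = R ∪ (S \ T) := by
            rw [← hS.2]
            ext x
            simp only [Finset.mem_union, Finset.mem_inter, Finset.mem_sdiff]
            tauto
          have hc : S.card = R.card + (S \ T).card := by
            conv_lhs => rw [hun]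
            exact Finset.card_union_of_disjoint hdisj
          rw [hc]
      rw [hbij]
      have : (∑ U ∈ Tᶜ.powerset, ((-1 : ℤ) ^ (d - 1 + (R.card + U.card))))
          = ((-1 : ℤ) ^ (d - 1 + R.card)) * ∑ U ∈ Tᶜ.powerset, ((-1 : ℤ) ^ U.card) := by
        rw [Finset.mul_sum]
        refine Finset.sum_congr rfl fun U _ => ?_
        rw [← pow_add, ← add_assoc]
      rw [this, Finset.sum_powerset_neg_one_pow_card, if_neg, mul_zero]
      intro h
      apply hT
      have : Tᶜᶜ = (∅ : Finset (Fin d))ᶜ := by rw [h]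
      simpa using this
    by_cases hRT : R = T
    · subst hRT
      have hsplit : Finset.univ.powerset.filter (fun S => S ∩ R = R)
          = insert Finset.univ (P.filter (fun S => S ∩ R = R)) := by
        ext S
        simp only [Finset.mem_insert, Finset.mem_filter, hP, Finset.mem_powerset,
          Finset.subset_univ, true_and]
        constructor
        · intro h
          by_cases hS : S = Finset.univ
          · exact Or.inl hS
          · exact Or.inr ⟨hS, h⟩
        · rintro (h | h)
          · subst h; exact Finset.inter_eq_right.2 (Finset.subset_univ R)
          · exact h.2
      have hnotmem : Finset.univ ∉ P.filter (fun S => S ∩ R = R) := by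
        simp [hP]
      rw [hsplit, Finset.sum_insert hnotmem] at hfull
      have hcard : (Finset.univ : Finset (Fin d)).card = d := by simp
      have hd : 0 < d := by
        rcases Nat.eq_zero_or_pos d with h0 | h0
        · exfalso; apply hT; ext x; exact absurd x.2 (by omega)
        · exact h0
      have hsign : ((-1 : ℤ) ^ (d - 1 + (Finset.univ : Finset (Fin d)).card)) = -1 := by
        rw [hcard]
        have : d - 1 + d = 2 * (d - 1) + 1 := by omega
        rw [this, pow_succ, pow_mul]
        simp
      rw [hsign] at hfull
      rw [if_pos rfl]
      linarith [hfull]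
    · rw [if_neg hRT]
      have heq : Finset.univ.powerset.filter (fun S => S ∩ T = R)
          = P.filter (fun S => S ∩ T = R) := by
        ext S
        simp only [Finset.mem_filter, hP, Finset.mem_powerset, Finset.subset_univ, true_and]
        constructor
        · intro h
          refine ⟨fun hS => hRT ?_, h⟩
          subst hS
          rw [← h, Finset.univ_inter]
        · exact And.right
      rw [← heq]
      exact hfull
  rw [Finset.sum_congr rfl coeff]
  simp only [ite_smul, one_smul, zero_smul]
  rw [Finset.sum_ite_eq' T.powerset T f]
  rw [if_pos (Finset.mem_powerset.2 le_rfl)]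
end
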